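/- (Theorem 2, case ρ12 ≤ M with strict rank inequality; saturation of the diversity order.) Assume μ1 = μ2 = 0, let ρ1 = rank(Σ1), ρ2 = rank(Σ2), ρ12 = rank(Σ1 + Σ2), assume ρ1 ≤ ρ2 ≤ ρ12, and assume the rank relations r1 = min(M, ρ1), r2 = min(M, ρ2), r12 = min(M, ρ12). If ρ12 ≤ M and ρ1 + ρ2 < 2·ρ12, then lim_{σ² → 0+} log P̄_err(σ²) / log σ² = (2·ρ12 − ρ1 − ρ2)/4; in particular this diversity order does not depend on M, so increasing the number of measurements beyond ρ12 does not increase the diversity order. -/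

import Mathlib

open Matrix MeasureTheory Filter Real Topology

/-- Pseudo-determinant of a real square matrix: the product of the nonzero
eigenvalues when the matrix is Hermitian (symmetric), with the empty product
equal to 1; junk value 0 otherwise. -/
noncomputable def pdet {n : ℕ} (A : Matrix (Fin n) (Fin n) ℝ) : ℝ :=
  if h : A.IsHermitian then
    ∏ i ∈ Finset.univ.filter (fun i => h.eigenvalues i ≠ 0), h.eigenvalues i
  else 0

/-- Bhattacharyya exponent `K(σ²)` for the two-class compressive
classification problem, as a function of the noise level `s = σ²`. -/
noncomputable def Kb {M N : ℕ} (Φ : Matrix (Fin M) (Fin N) ℝ)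
    (S1 S2 : Matrix (Fin N) (Fin N) ℝ) (μ1 μ2 : Fin N → ℝ) (s : ℝ) : ℝ :=
  1/8 * ((Φ *ᵥ (μ1 - μ2)) ⬝ᵥ
      (((1/2 : ℝ) • (Φ * (S1 + S2) * Φᵀ + s • (1 : Matrix (Fin M) (Fin M) ℝ)))⁻¹
        *ᵥ (Φ *ᵥ (μ1 - μ2))))
  + 1/2 * Real.log
      (((1/2 : ℝ) • (Φ * (S1 + S2) * Φᵀ + s • (1 : Matrix (Fin M) (Fin M) ℝ))).det /
        Real.sqrt ((Φ * S1 * Φᵀ + s • (1 : Matrix (Fin M) (Fin M) ℝ)).det *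
          (Φ * S2 * Φᵀ + s • (1 : Matrix (Fin M) (Fin M) ℝ)).det))

/-- Bhattacharyya upper bound `P̄_err(σ²)` to the misclassification probability. -/
noncomputable def Perr {M N : ℕ} (Φ : Matrix (Fin M) (Fin N) ℝ)
    (S1 S2 : Matrix (Fin N) (Fin N) ℝ) (μ1 μ2 : Fin N → ℝ) (P1 P2 : ℝ) (s : ℝ) : ℝ :=
  Real.sqrt (P1 * P2) * Real.exp (-(Kb Φ S1 S2 μ1 μ2 s))

/-! With equal means the Bhattacharyya exponent is the log-determinant term alone. For a positive
semidefinite `A` of rank `r` on `ℝ^M`, `det (A + s I) = s ^ (M - r) * ∏_{λ ≠ 0} (λ + s)`, so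
`log det (A + s I) = (M - r) log s + O(1)` as `s → 0+`. Hence
`log P̄_err(s) = ((2 r12 - r1 - r2) / 4) log s + O(1)`, the `M`s cancelling; and `rᵢ = ρᵢ` since
every `ρᵢ ≤ ρ12 ≤ M`. -/

open Finset

theorem Matrix.PosSemidef.mul_mul_transpose_same {m n : Type*} [Fintype m] [Fintype n]
    {S : Matrix n n ℝ} (hS : S.PosSemidef) (Φ : Matrix m n ℝ) : (Φ * S * Φᵀ).PosSemidef := by
  simpa using hS.mul_mul_conjTranspose_same Φ

namespace Matrix

variable {n : Type*} [Fintype n] [DecidableEq n] {A : Matrix n n ℝ}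

theorem IsHermitian.det_add_smul_one (hA : A.IsHermitian) (s : ℝ) :
    (A + s • 1).det = ∏ i, (hA.eigenvalues i + s) := by
  have hchar := congrArg (Polynomial.eval (-s)) hA.charpoly_eq
  rw [eval_charpoly, Polynomial.eval_prod] at hchar
  have hneg : A + s • 1 = -(scalar n (-s) - A) := by
    rw [scalar_apply, ← smul_one_eq_diagonal]; simp [neg_smul]
  rw [hneg, det_neg, hchar, ← Finset.card_univ, ← Finset.prod_neg]
  simp

theorem IsHermitian.det_add_smul_one_eq_pow_mul_prod (hA : A.IsHermitian) (s : ℝ) :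
    (A + s • 1).det = s ^ (Fintype.card n - A.rank) *
      ∏ i with hA.eigenvalues i ≠ 0, (hA.eigenvalues i + s) := by
  have hcard : #{i | ¬hA.eigenvalues i ≠ 0} = Fintype.card n - A.rank := by
    rw [hA.rank_eq_card_non_zero_eigs, Fintype.card_subtype, filter_not, card_sdiff,
      card_univ, inter_univ]
  have hzero : ∏ i with ¬hA.eigenvalues i ≠ 0, (hA.eigenvalues i + s) =
      s ^ (Fintype.card n - A.rank) := by
    rw [← hcard, ← prod_const]
    exact prod_congr rfl fun i hi => by simp_all
  rw [hA.det_add_smul_one, ← prod_filter_not_mul_prod_filter _ (fun i => hA.eigenvalues i ≠ 0),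
    hzero]

theorem PosSemidef.det_add_smul_one_pos (hA : A.PosSemidef) {s : ℝ} (hs : 0 < s) :
    0 < (A + s • 1).det :=
  (PosDef.posSemidef_add hA (PosDef.one.smul hs)).det_pos

end Matrix

theorem pdet_eq_prod {m : ℕ} {A : Matrix (Fin m) (Fin m) ℝ} (hA : A.IsHermitian) :
    pdet A = ∏ i with hA.eigenvalues i ≠ 0, hA.eigenvalues i := by
  rw [pdet, dif_pos hA]

theorem pdet_pos {m : ℕ} {A : Matrix (Fin m) (Fin m) ℝ} (hA : A.PosSemidef) : 0 < pdet A := by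
  rw [pdet_eq_prod hA.isHermitian]
  exact prod_pos fun i hi => (hA.eigenvalues_nonneg i).lt_of_ne' (mem_filter.mp hi).2

theorem tendsto_log_det_add_smul_one_sub_mul_log {m : ℕ} {A : Matrix (Fin m) (Fin m) ℝ}
    (hA : A.PosSemidef) :
    Tendsto (fun s => log (A + s • 1).det - ((m : ℝ) - A.rank) * log s) (𝓝[>] 0)
      (𝓝 (log (pdet A))) := by
  set p : ℝ → ℝ := fun s => ∏ i with hA.isHermitian.eigenvalues i ≠ 0,
    (hA.isHermitian.eigenvalues i + s)
  have hp : ContinuousAt (fun s => log (p s)) 0 := by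
    refine ContinuousAt.log (by fun_prop) ?_
    simpa [p, ← pdet_eq_prod] using (pdet_pos hA).ne'
  have hp0 : p 0 = pdet A := by simp [p, pdet_eq_prod hA.isHermitian]
  rw [← hp0]
  refine (hp.tendsto.mono_left nhdsWithin_le_nhds).congr' ?_
  filter_upwards [self_mem_nhdsWithin] with s hs
  have hps : 0 < p s := prod_pos fun i _ => add_pos_of_nonneg_of_pos (hA.eigenvalues_nonneg i) hs
  rw [hA.isHermitian.det_add_smul_one_eq_pow_mul_prod, log_mul (pow_pos hs _).ne' hps.ne',
    log_pow, Fintype.card_fin, Nat.cast_sub A.rank_le_height]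
  ring

theorem tendsto_div_log_of_tendsto_sub_mul_log {f : ℝ → ℝ} {κ c : ℝ}
    (h : Tendsto (fun s => f s - κ * log s) (𝓝[>] 0) (𝓝 c)) :
    Tendsto (fun s => f s / log s) (𝓝[>] 0) (𝓝 κ) := by
  have hinv : Tendsto (fun s => (log s)⁻¹) (𝓝[>] 0) (𝓝 0) :=
    tendsto_inv_atBot_zero.comp tendsto_log_nhdsGT_zero
  have hlim := (h.mul hinv).const_add κ
  rw [mul_zero, add_zero] at hlim
  refine hlim.congr' ?_
  filter_upwards [Ioo_mem_nhdsGT one_pos] with s hs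
  have hlog : log s ≠ 0 := (log_neg hs.1 hs.2).ne
  field_simp
  ring

theorem log_Perr_of_eq_means {M N : ℕ} (Φ : Matrix (Fin M) (Fin N) ℝ)
    {S1 S2 : Matrix (Fin N) (Fin N) ℝ} (hS1 : S1.PosSemidef) (hS2 : S2.PosSemidef)
    (μ : Fin N → ℝ) {P1 P2 : ℝ} (hP1 : 0 < P1) (hP2 : 0 < P2) {s : ℝ} (hs : 0 < s) :
    log (Perr Φ S1 S2 μ μ P1 P2 s) = log √(P1 * P2) - M / 2 * log (1 / 2)
      - 1 / 2 * log (Φ * (S1 + S2) * Φᵀ + s • 1).det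
      + 1 / 4 * log (Φ * S1 * Φᵀ + s • 1).det + 1 / 4 * log (Φ * S2 * Φᵀ + s • 1).det := by
  have hd1 := (hS1.mul_mul_transpose_same Φ).det_add_smul_one_pos hs
  have hd2 := (hS2.mul_mul_transpose_same Φ).det_add_smul_one_pos hs
  have hd12 := ((hS1.add hS2).mul_mul_transpose_same Φ).det_add_smul_one_pos hs
  have hhalf : (0 : ℝ) < (1 / 2) ^ M := by positivity
  rw [Perr, log_mul (sqrt_pos.mpr (mul_pos hP1 hP2)).ne' (exp_ne_zero _), log_exp, Kb, sub_self,
    mulVec_zero, zero_dotProduct, mul_zero, zero_add, det_smul, Fintype.card_fin,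
    log_div (mul_pos hhalf hd12).ne' (sqrt_pos.mpr (mul_pos hd1 hd2)).ne',
    log_mul hhalf.ne' hd12.ne', log_pow, log_sqrt (mul_pos hd1 hd2).le, log_mul hd1.ne' hd2.ne']
  ring

theorem theorem2_case_rho12_le_M_general (M N : ℕ)
    (Φ : Matrix (Fin M) (Fin N) ℝ) (S1 S2 : Matrix (Fin N) (Fin N) ℝ)
    (hS1 : S1.PosSemidef) (hS2 : S2.PosSemidef) (μ1 μ2 : Fin N → ℝ)
    (hμ1 : μ1 = 0) (hμ2 : μ2 = 0)
    (P1 P2 : ℝ) (hP1 : 0 < P1) (hP2 : 0 < P2)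
    (hρa : S1.rank ≤ S2.rank) (hρb : S2.rank ≤ (S1 + S2).rank)
    (hr1 : (Φ * S1 * Φᵀ).rank = min M S1.rank)
    (hr2 : (Φ * S2 * Φᵀ).rank = min M S2.rank)
    (hr12 : (Φ * (S1 + S2) * Φᵀ).rank = min M (S1 + S2).rank)
    (hcase1 : (S1 + S2).rank ≤ M) :
    Filter.Tendsto
      (fun s : ℝ => Real.log (Perr Φ S1 S2 μ1 μ2 P1 P2 s) / Real.log s) (𝓝[>] 0)
      (𝓝 ((2 * ((S1 + S2).rank : ℝ) - (S1.rank : ℝ) - (S2.rank : ℝ)) / 4)) := by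
  subst hμ1 hμ2
  have hρ2 : S2.rank ≤ M := hρb.trans hcase1
  rw [min_eq_right (hρa.trans hρ2)] at hr1
  rw [min_eq_right hρ2] at hr2
  rw [min_eq_right hcase1] at hr12
  have h1 := tendsto_log_det_add_smul_one_sub_mul_log (hS1.mul_mul_transpose_same Φ)
  have h2 := tendsto_log_det_add_smul_one_sub_mul_log (hS2.mul_mul_transpose_same Φ)
  have h12 := tendsto_log_det_add_smul_one_sub_mul_log ((hS1.add hS2).mul_mul_transpose_same Φ)
  refine tendsto_div_log_of_tendsto_sub_mul_log
    (((((h1.const_mul (1 / 4)).add (h2.const_mul (1 / 4))).sub (h12.const_mul (1 / 2))).const_add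
      (log √(P1 * P2) - M / 2 * log (1 / 2))).congr' ?_)
  filter_upwards [self_mem_nhdsWithin] with s hs
  rw [log_Perr_of_eq_means Φ hS1 hS2 0 hP1 hP2 hs, hr1, hr2, hr12]
  ring

/-- Theorem 2, case ρ12 ≤ M with ρ1 + ρ2 < 2ρ12: the diversity order is (2ρ12 - ρ1 - ρ2)/4, independent of M. -/
theorem theorem2_case_rho12_le_M (M N : ℕ) (hM : 0 < M) (hN : 0 < N)
    (Φ : Matrix (Fin M) (Fin N) ℝ) (S1 S2 : Matrix (Fin N) (Fin N) ℝ)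
    (hS1 : S1.PosSemidef) (hS2 : S2.PosSemidef) (μ1 μ2 : Fin N → ℝ)
    (hμ1 : μ1 = 0) (hμ2 : μ2 = 0)
    (P1 P2 : ℝ) (hP1 : 0 < P1) (hP2 : 0 < P2) (hP : P1 + P2 = 1)
    (hρa : S1.rank ≤ S2.rank) (hρb : S2.rank ≤ (S1 + S2).rank)
    (hr1 : (Φ * S1 * Φᵀ).rank = min M S1.rank)
    (hr2 : (Φ * S2 * Φᵀ).rank = min M S2.rank)
    (hr12 : (Φ * (S1 + S2) * Φᵀ).rank = min M (S1 + S2).rank)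
    (hcase1 : (S1 + S2).rank ≤ M) (hcase2 : S1.rank + S2.rank < 2 * (S1 + S2).rank) :
    Filter.Tendsto
      (fun s : ℝ => Real.log (Perr Φ S1 S2 μ1 μ2 P1 P2 s) / Real.log s) (𝓝[>] 0)
      (𝓝 ((2 * ((S1 + S2).rank : ℝ) - (S1.rank : ℝ) - (S2.rank : ℝ)) / 4)) :=
  theorem2_case_rho12_le_M_general M N Φ S1 S2 hS1 hS2 μ1 μ2 hμ1 hμ2 P1 P2 hP1 hP2 hρa hρb hr1 hr2
    hr12 hcase1
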